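/- For any prime p ≥ 5, the Gaussian binomial coefficient C(2p, p)_q satisfies C(2p, p)_q ≡ 1 + q^{p^2} − ((p^2−1)/12)·(q^p − 1)^2 modulo [p]_q^3 in ℤ[q]. -/

import Mathlib

/-!
Write `ε = [p]_q` and `u = q - 1`, so that `q ^ p = 1 + u ε`. The factorial formula gives
`C(2p, p)_q · [p-1]_q! = (1 + q^p) ∏_{k=1}^{p-1} [p+k]_q`, and pairing `k` with `p - k` turns this
into the exact identity `[p+k]_q [2p-k]_q = q^p [k]_q [p-k]_q + ε² (1 + q^p)`. Over `ℚ` the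
q-integers `[k]_q` with `0 < k < p` are invertible modulo `Φ_p³ = ε³`, and there
`C(2p, p)_q ≡ (1 + q^p) q^{pN} + 4 ε² ∑_{k=1}^{N} 1 / ([k]_q [p-k]_q)` with `p = 2N + 1`.
The sum only matters modulo `ε`, i.e. at a primitive `p`-th root of unity `ζ`, where
`∑_{k=1}^{p-1} 1 / ((1 - ζ^k) (1 - ζ^{-k})) = (p² - 1) / 12`: this follows from the coefficients
of `t`, `t²`, `t³` in `t ∏_{k=1}^{p-1} (t + 1 - ζ^k) = (1 + t)^p - 1`. Expanding `(1 + u ε)^n` to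
second order finishes the computation.
-/

open Polynomial Finset

noncomputable def qInt (n : ℕ) : Polynomial ℤ := ∑ i ∈ Finset.range n, X ^ i

noncomputable def qBinom : ℕ → ℕ → Polynomial ℤ
  | _, 0 => 1
  | 0, _ + 1 => 0
  | n + 1, k + 1 => qBinom n k + X ^ (k + 1) * qBinom n (k + 1)

noncomputable def qFact (n : ℕ) : ℤ[X] := ∏ i ∈ range n, qInt (i + 1)

lemma qInt_add (a b : ℕ) : qInt (a + b) = qInt a + X ^ a * qInt b := by
  simp [qInt, sum_range_add, mul_sum, pow_add]

lemma X_sub_one_mul_qInt (n : ℕ) : (X - 1) * qInt n = X ^ n - 1 := by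
  rw [qInt, mul_comm, geom_sum_mul]

lemma qInt_ne_zero {n : ℕ} (hn : n ≠ 0) : qInt n ≠ 0 := by
  intro h
  have := congrArg (eval 1) h
  simp [qInt, eval_finsetSum] at this
  omega

lemma qFact_ne_zero (n : ℕ) : qFact n ≠ 0 :=
  prod_ne_zero_iff.mpr fun i _ ↦ qInt_ne_zero i.succ_ne_zero

lemma qBinom_eq_zero_of_lt : ∀ {n k : ℕ}, n < k → qBinom n k = 0
  | 0, _ + 1, _ => rfl
  | n + 1, k + 1, h => by
    rw [qBinom, qBinom_eq_zero_of_lt (by omega : n < k),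
      qBinom_eq_zero_of_lt (by omega : n < k + 1)]
    ring

lemma qBinom_self : ∀ n : ℕ, qBinom n n = 1
  | 0 => rfl
  | n + 1 => by rw [qBinom, qBinom_self n, qBinom_eq_zero_of_lt n.lt_succ_self]; ring

lemma qFact_succ (n : ℕ) : qFact (n + 1) = qFact n * qInt (n + 1) :=
  prod_range_succ _ _

lemma qBinom_add_mul_qFact_mul_qFact : ∀ n k : ℕ,
    qBinom (n + k) k * (qFact n * qFact k) = qFact (n + k)
  | n, 0 => by simp [qBinom, qFact]
  | 0, k + 1 => by simp [qBinom_self, qFact]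
  | n + 1, k + 1 => by
    have h₁ := qBinom_add_mul_qFact_mul_qFact (n + 1) k
    have h₂ := qBinom_add_mul_qFact_mul_qFact n (k + 1)
    rw [show n + 1 + k = n + (k + 1) by omega, qFact_succ n] at h₁
    rw [show n + 1 + (k + 1) = n + (k + 1) + 1 by omega, qBinom, qFact_succ n, qFact_succ k,
      qFact_succ (n + (k + 1)), show n + (k + 1) + 1 = (k + 1) + (n + 1) by omega,
      qInt_add (k + 1) (n + 1)]
    rw [qFact_succ k] at h₂
    linear_combination qInt (k + 1) * h₁ + X ^ (k + 1) * qInt (n + 1) * h₂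

lemma qFact_add (n k : ℕ) : qFact (n + k) = qFact n * ∏ i ∈ range k, qInt (n + (i + 1)) := by
  simp only [qFact, prod_range_add, add_assoc]

lemma qBinom_add_mul_qFact (n k : ℕ) :
    qBinom (n + k) k * qFact k = ∏ i ∈ range k, qInt (n + (i + 1)) := by
  apply mul_left_cancel₀ (qFact_ne_zero n)
  rw [← qFact_add, ← qBinom_add_mul_qFact_mul_qFact]
  ring

lemma qBinom_two_mul_mul_qFact (m : ℕ) :
    qBinom (2 * (m + 1)) (m + 1) * qFact m =
      (1 + X ^ (m + 1)) * ∏ i ∈ range m, qInt (m + 1 + (i + 1)) := by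
  have h := qBinom_add_mul_qFact (m + 1) (m + 1)
  rw [← two_mul, prod_range_succ, qFact_succ, qInt_add (m + 1) (m + 1)] at h
  apply mul_left_cancel₀ (qInt_ne_zero m.succ_ne_zero)
  linear_combination h

lemma qInt_add_mul_qInt_add {k l n : ℕ} (h : k + l = n) :
    qInt (n + k) * qInt (n + l) = X ^ n * (qInt k * qInt l) + qInt n ^ 2 * (1 + X ^ n) := by
  have hn := X_sub_one_mul_qInt n
  have hk := X_sub_one_mul_qInt k
  have hkl := qInt_add k l
  rw [h] at hkl
  rw [qInt_add n k, qInt_add n l]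
  linear_combination
    (-(X ^ n * qInt k * qInt l)) * hn + (X ^ n * qInt n * qInt l) * hk - X ^ n * qInt n * hkl

lemma qInt_eq_cyclotomic {p : ℕ} (hp : p.Prime) : qInt p = cyclotomic p ℤ := by
  have := Fact.mk hp
  rw [cyclotomic_prime, qInt]

lemma natDegree_qInt_le (n : ℕ) : (qInt n).natDegree ≤ n - 1 :=
  natDegree_sum_le_of_forall_le _ _ fun i hi ↦
    (natDegree_X_pow_le i).trans (by rw [mem_range] at hi; omega)

lemma aeval_qInt {K : Type*} [Field K] {ζ : K} (hζ : ζ ≠ 1) (k : ℕ) :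
    aeval ζ (qInt k) = (ζ ^ k - 1) / (ζ - 1) := by
  rw [eq_div_iff (sub_ne_zero.mpr hζ)]
  have := congrArg (aeval ζ) (X_sub_one_mul_qInt k)
  simp only [map_mul, map_sub, aeval_X, map_one, map_pow] at this
  linear_combination this

lemma prod_range_two_mul {M : Type*} [CommMonoid M] (f : ℕ → M) (N : ℕ) :
    ∏ i ∈ range (2 * N), f i = ∏ i ∈ range N, f i * f (2 * N - 1 - i) := by
  rw [two_mul, prod_range_add, ← prod_range_reflect (fun i ↦ f (N + i)), ← prod_mul_distrib]
  refine prod_congr rfl fun i hi ↦ ?_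
  rw [mem_range] at hi
  congr 2
  omega

lemma sum_range_two_mul {M : Type*} [AddCommMonoid M] (f : ℕ → M) (N : ℕ) :
    ∑ i ∈ range (2 * N), f i = ∑ i ∈ range N, (f i + f (2 * N - 1 - i)) :=
  prod_range_two_mul (M := Multiplicative M) f N

lemma qBinom_central_mul_prod {p N : ℕ} (hN : p = 2 * N + 1) :
    qBinom (2 * p) p * ∏ i ∈ range N, (qInt (i + 1) * qInt (p - 1 - i)) =
      (1 + X ^ p) * ∏ i ∈ range N,
        (X ^ p * (qInt (i + 1) * qInt (p - 1 - i)) + qInt p ^ 2 * (1 + X ^ p)) := by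
  subst hN
  have h := qBinom_two_mul_mul_qFact (2 * N)
  rw [qFact, prod_range_two_mul, prod_range_two_mul] at h
  have hidx : ∀ i ∈ range N, 2 * N - 1 - i + 1 = 2 * N + 1 - 1 - i := fun i hi ↦ by
    rw [mem_range] at hi; omega
  calc _ = qBinom (2 * (2 * N + 1)) (2 * N + 1) *
        ∏ i ∈ range N, (qInt (i + 1) * qInt (2 * N - 1 - i + 1)) := by
        rw [prod_congr rfl fun i hi ↦ by rw [← hidx i hi]]
    _ = _ := h
    _ = _ := by
      refine congrArg _ (prod_congr rfl fun i hi ↦ ?_)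
      rw [hidx i hi]
      exact qInt_add_mul_qInt_add (by rw [mem_range] at hi; omega)

section CommRing

variable {R : Type*} [CommRing R]

lemma prod_one_add_mul_of_sq_eq_zero {ι : Type*} {δ : R} (hδ : δ ^ 2 = 0) (s : Finset ι)
    (a : ι → R) : ∏ i ∈ s, (1 + δ * a i) = 1 + δ * ∑ i ∈ s, a i := by
  classical
  induction s using Finset.induction_on with
  | empty => simp
  | insert j s hj ih =>
    rw [prod_insert hj, sum_insert hj, ih]
    linear_combination a j * (∑ i ∈ s, a i) * hδ

lemma pow_three_dvd_two_mul_prod_one_add_mul_sub {ι : Type*} (t : R) (s : Finset ι) (z : ι → R) :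
    t ^ 3 ∣ 2 * ∏ i ∈ s, (1 + t * z i) -
      (2 + 2 * t * ∑ i ∈ s, z i + t ^ 2 * ((∑ i ∈ s, z i) ^ 2 - ∑ i ∈ s, z i ^ 2)) := by
  classical
  induction s using Finset.induction_on with
  | empty => simp
  | insert j s hj ih =>
    obtain ⟨r, hr⟩ := ih
    refine ⟨(1 + t * z j) * r + z j * ((∑ i ∈ s, z i) ^ 2 - ∑ i ∈ s, z i ^ 2), ?_⟩
    rw [prod_insert hj, sum_insert hj, sum_insert hj]
    linear_combination (1 + t * z j) * hr

lemma one_add_one_add_pow_two_mul_add_one {w : R} (hw : w ^ 3 = 0) (N : ℕ) :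
    1 + (1 + w) ^ (2 * N + 1) = (2 + w) * (1 + w) ^ N + N * (N + 1) * w ^ 2 := by
  obtain ⟨a, ha⟩ := sq_dvd_add_pow_sub_sub w 1 N
  have hv : (1 + w) ^ N = 1 + N * w + w ^ 2 * a := by
    rw [add_comm 1 w]
    linear_combination ha
  rw [two_mul, pow_succ, pow_add, hv]
  linear_combination (2 * N * a + a + N ^ 2 + a ^ 2 * w + 2 * N * a * w + a ^ 2 * w ^ 2) * hw

lemma mul_add_sq_mul_one_add_eq {ε u Q b : R} (hε : ε ^ 3 = 0) (hQ : Q = 1 + u * ε)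
    (hb : IsUnit b) : Q * b + ε ^ 2 * (1 + Q) = Q * b * (1 + ε ^ 2 * (2 * Ring.inverse b)) := by
  have hbb := Ring.mul_inverse_cancel b hb
  subst hQ
  linear_combination (-u) * hε - 2 * ε ^ 2 * (1 + u * ε) * hbb

end CommRing

lemma map_ringInverse {R K : Type*} [CommRing R] [Field K] (f : R →+* K) {x : R}
    (hx : IsUnit x) : f (Ring.inverse x) = (f x)⁻¹ :=
  eq_inv_of_mul_eq_one_right (by rw [← map_mul, Ring.mul_inverse_cancel x hx, map_one])

namespace IsPrimitiveRoot

variable {K : Type*} [Field K] {ζ : K} {n : ℕ}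

lemma prod_X_add_C_one_sub_pow_mul_X (hζ : IsPrimitiveRoot ζ (n + 1)) :
    (∏ k ∈ range n, (X + C (1 - ζ ^ (k + 1)))) * X = (X + 1) ^ (n + 1) - 1 := by
  have h := X_pow_sub_C_eq_prod hζ n.succ_pos (one_pow (n + 1))
  rw [prod_range_succ'] at h
  apply_fun aeval (X + 1 : K[X]) at h
  simp only [map_mul, map_sub, map_pow, aeval_X, aeval_C, map_prod, algebraMap_eq, map_one,
    pow_zero, mul_one, add_sub_cancel_right] at h
  rw [h]
  congr 1
  refine prod_congr rfl fun k _ ↦ ?_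
  simp only [map_sub, map_one, map_pow]
  ring

lemma one_sub_pow_ne_zero (hζ : IsPrimitiveRoot ζ (n + 1)) {k : ℕ} (hk : k < n) :
    1 - ζ ^ (k + 1) ≠ 0 :=
  sub_ne_zero.mpr (hζ.pow_ne_one_of_pos_of_lt k.succ_ne_zero (by omega)).symm

variable [CharZero K]

lemma sum_inv_one_sub_pow_and_sq_sub_sum_sq (hζ : IsPrimitiveRoot ζ (n + 1)) :
    ∑ k ∈ range n, (1 - ζ ^ (k + 1))⁻¹ = n / 2 ∧
      (∑ k ∈ range n, (1 - ζ ^ (k + 1))⁻¹) ^ 2 - ∑ k ∈ range n, ((1 - ζ ^ (k + 1))⁻¹) ^ 2 =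
        n * (n - 1) / 3 := by
  set σ := ∑ k ∈ range n, (1 - ζ ^ (k + 1))⁻¹
  set τ := σ ^ 2 - ∑ k ∈ range n, ((1 - ζ ^ (k + 1))⁻¹) ^ 2
  set P := ∏ k ∈ range n, (1 - ζ ^ (k + 1))
  have hfactor : ∏ k ∈ range n, (X + C (1 - ζ ^ (k + 1))) =
      C P * ∏ k ∈ range n, (1 + X * C (1 - ζ ^ (k + 1))⁻¹) := by
    rw [map_prod, ← prod_mul_distrib]
    refine prod_congr rfl fun k hk ↦ ?_
    rw [mul_add, mul_one, mul_left_comm, ← C_mul,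
      mul_inv_cancel₀ (hζ.one_sub_pow_ne_zero (mem_range.mp hk)), C_1, mul_one, add_comm]
  obtain ⟨r, hr⟩ := pow_three_dvd_two_mul_prod_one_add_mul_sub (X : K[X]) (range n)
    (fun k ↦ C (1 - ζ ^ (k + 1))⁻¹)
  simp only [← map_sum, ← map_pow, ← map_sub] at hr
  have key : 2 * ((X + 1) ^ (n + 1) - 1) =
      C (2 * P) * X + C (2 * P * σ) * X ^ 2 + C (P * τ) * X ^ 3 + X ^ 4 * (C P * r) := by
    rw [← hζ.prod_X_add_C_one_sub_pow_mul_X, hfactor]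
    simp only [map_mul, map_ofNat]
    linear_combination X * C P * hr
  have hcoeff : ∀ j, j ≠ 0 → j < 4 →
      2 * ((n + 1).choose j : K) = (C (2 * P) * X + C (2 * P * σ) * X ^ 2 + C (P * τ) * X ^ 3 +
        X ^ 4 * (C P * r)).coeff j := by
    intro j hj0 hj4
    rw [← key]
    simp [coeff_X_add_one_pow, coeff_one, hj0]
  have h1 := hcoeff 1 one_ne_zero (by norm_num)
  have h2 := hcoeff 2 two_ne_zero (by norm_num)
  have h3 := hcoeff 3 three_ne_zero (by norm_num)
  simp only [coeff_add, coeff_C_mul_X_pow, coeff_C_mul_X, coeff_X_pow_mul'] at h1 h2 h3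
  norm_num at h1 h2 h3
  rw [← h1] at h2 h3
  have hn1 : (n : K) + 1 ≠ 0 := n.cast_add_one_ne_zero
  have c2 : ((n + 1).choose 2 : K) = (n + 1) * n / 2 := by
    rw [Nat.cast_choose_two]
    push_cast
    ring
  have c3 : ((n + 1).choose 3 : K) * 3 = (n + 1) * ((n.choose 2 : ℕ) : K) := by
    exact_mod_cast (Nat.add_one_mul_choose_eq n 2).symm
  rw [Nat.cast_choose_two] at c3
  exact ⟨mul_left_cancel₀ hn1 (by linear_combination (-1 / 2 : K) * h2 + c2),
    mul_left_cancel₀ hn1 (by linear_combination -h3 + (2 / 3 : K) * c3)⟩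

lemma sum_inv_one_sub_pow_mul_one_sub_pow (hζ : IsPrimitiveRoot ζ (n + 1)) :
    ∑ k ∈ range n, ((1 - ζ ^ (k + 1)) * (1 - ζ ^ (n - k)))⁻¹ = n * (n + 2) / 12 := by
  obtain ⟨hσ, hτ⟩ := hζ.sum_inv_one_sub_pow_and_sq_sub_sum_sq
  have hterm : ∀ k ∈ range n, ((1 - ζ ^ (k + 1)) * (1 - ζ ^ (n - k)))⁻¹ =
      (1 - ζ ^ (k + 1))⁻¹ - ((1 - ζ ^ (k + 1))⁻¹) ^ 2 := by
    intro k hk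
    have hk' := mem_range.mp hk
    have hprod : ζ ^ (k + 1) * ζ ^ (n - k) = 1 := by
      rw [← pow_add, show k + 1 + (n - k) = n + 1 by omega, hζ.pow_eq_one]
    have h₁ := hζ.one_sub_pow_ne_zero hk'
    have h₂ : 1 - ζ ^ (n - k) ≠ 0 := by
      have := hζ.one_sub_pow_ne_zero (show n - k - 1 < n by omega)
      rwa [show n - k - 1 + 1 = n - k by omega] at this
    field_simp
    linear_combination -hprod
  rw [sum_congr rfl hterm, sum_sub_distrib]
  linear_combination (1 - (∑ k ∈ range n, (1 - ζ ^ (k + 1))⁻¹ + n / 2)) * hσ + hτ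

end IsPrimitiveRoot

abbrev CycCube (p : ℕ) := AdjoinRoot (cyclotomic p ℚ ^ 3)

noncomputable def toCycCube (p : ℕ) : ℤ[X] →+* CycCube p :=
  (AdjoinRoot.mk _).comp (mapRingHom (Int.castRingHom ℚ))

lemma toCycCube_apply (p : ℕ) (f : ℤ[X]) :
    toCycCube p f = AdjoinRoot.mk _ (f.map (Int.castRingHom ℚ)) := rfl

section CycCube

variable {p : ℕ}

lemma toCycCube_qInt_pow_three (hp : p.Prime) : toCycCube p (qInt p) ^ 3 = 0 := by
  rw [← map_pow, toCycCube_apply, Polynomial.map_pow, qInt_eq_cyclotomic hp, map_cyclotomic,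
    AdjoinRoot.mk_self]

lemma toCycCube_X_pow (p : ℕ) :
    toCycCube p X ^ p = 1 + (toCycCube p X - 1) * toCycCube p (qInt p) := by
  have := congrArg (toCycCube p) (X_sub_one_mul_qInt p)
  simp only [map_mul, map_sub, map_pow, map_one] at this
  linear_combination -this

lemma isUnit_toCycCube_qInt (hp : p.Prime) {k : ℕ} (hk0 : 0 < k) (hk : k < p) :
    IsUnit (toCycCube p (qInt k)) := by
  set g := (qInt k).map (Int.castRingHom ℚ)
  have hg : g ≠ 0 := (Polynomial.map_ne_zero_iff (RingHom.injective_int _)).mpr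
    (qInt_ne_zero hk0.ne')
  have hndvd : ¬ cyclotomic p ℚ ∣ g := fun h ↦ by
    have hdeg := natDegree_le_of_dvd h hg
    rw [natDegree_cyclotomic, Nat.totient_prime hp] at hdeg
    have : g.natDegree ≤ k - 1 := natDegree_map_le.trans (natDegree_qInt_le k)
    omega
  obtain ⟨a, b, hab⟩ := (((cyclotomic.irreducible_rat hp.pos).coprime_iff_not_dvd).mpr
    hndvd).pow_left (m := 3)
  refine IsUnit.of_mul_eq_one (AdjoinRoot.mk _ b) ?_
  have := congrArg (AdjoinRoot.mk (cyclotomic p ℚ ^ 3)) hab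
  rw [map_add, map_mul, map_mul, AdjoinRoot.mk_self, mul_zero, zero_add, map_one] at this
  rw [toCycCube_apply, mul_comm, this]

lemma isUnit_toCycCube_qInt_mul_qInt_sub (hp : p.Prime) {i : ℕ} (hi : i + 1 < p) :
    IsUnit (toCycCube p (qInt (i + 1)) * toCycCube p (qInt (p - 1 - i))) :=
  (isUnit_toCycCube_qInt hp (by omega) hi).mul (isUnit_toCycCube_qInt hp (by omega) (by omega))

lemma qInt_pow_three_dvd_of_toCycCube_eq_zero (hp : p.Prime) {f : ℤ[X]}
    (h : toCycCube p f = 0) : qInt p ^ 3 ∣ f := by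
  rw [toCycCube_apply, AdjoinRoot.mk_eq_zero, ← map_cyclotomic p (Int.castRingHom ℚ),
    ← qInt_eq_cyclotomic hp, ← Polynomial.map_pow] at h
  exact (map_dvd_map _ (RingHom.injective_int _)
    ((qInt_eq_cyclotomic hp ▸ cyclotomic.monic p ℤ).pow 3)).mp h

end CycCube

section Evaluation

variable {K : Type*} [Field K] [CharZero K] {ζ : K} {p : ℕ}

noncomputable def evalCycCube (hζ : IsPrimitiveRoot ζ p) (hp : 0 < p) : CycCube p →+* K :=
  AdjoinRoot.lift (algebraMap ℚ K) ζ (by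
    rw [eval₂_pow, ← aeval_def, cyclotomic_eq_minpoly_rat hζ hp, minpoly.aeval,
      zero_pow three_ne_zero])

lemma evalCycCube_toCycCube (hζ : IsPrimitiveRoot ζ p) (hp : 0 < p) (f : ℤ[X]) :
    evalCycCube hζ hp (toCycCube p f) = aeval ζ f := by
  rw [evalCycCube, toCycCube_apply, AdjoinRoot.lift_mk, eval₂_map, aeval_def]
  congr 1
  exact RingHom.ext_int _ _

lemma toCycCube_qInt_sq_mul_eq_zero (hζ : IsPrimitiveRoot ζ p) (hp : p.Prime) {a : CycCube p}
    (ha : evalCycCube hζ hp.pos a = 0) : toCycCube p (qInt p) ^ 2 * a = 0 := by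
  induction a using AdjoinRoot.induction_on with
  | ih g =>
    rw [evalCycCube, AdjoinRoot.lift_mk, ← aeval_def] at ha
    have hdvd : cyclotomic p ℚ ∣ g := cyclotomic_eq_minpoly_rat hζ hp.pos ▸ minpoly.dvd ℚ ζ ha
    rw [toCycCube_apply, qInt_eq_cyclotomic hp, map_cyclotomic, ← map_pow, ← map_mul,
      AdjoinRoot.mk_eq_zero, pow_succ]
    exact mul_dvd_mul_left _ hdvd

end Evaluation

section Central

variable {p N : ℕ}

lemma toCycCube_qBinom_central (hp : p.Prime) (hN : p = 2 * N + 1) :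
    toCycCube p (qBinom (2 * p) p) =
      (1 + toCycCube p X ^ p) * (toCycCube p X ^ p) ^ N +
        2 * (toCycCube p (qInt p) ^ 2 * (2 * ∑ i ∈ range N,
          Ring.inverse (toCycCube p (qInt (i + 1)) * toCycCube p (qInt (p - 1 - i))))) := by
  set ι := toCycCube p
  set Q := ι X ^ p
  set ε := ι (qInt p)
  set B := fun i ↦ ι (qInt (i + 1)) * ι (qInt (p - 1 - i))
  have hε : ε ^ 3 = 0 := toCycCube_qInt_pow_three hp
  have hQ : Q = 1 + (ι X - 1) * ε := toCycCube_X_pow p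
  have hB : ∀ i ∈ range N, IsUnit (B i) := fun i hi ↦
    isUnit_toCycCube_qInt_mul_qInt_sub hp (by rw [mem_range] at hi; omega)
  have hεQ : ∀ n, ε ^ 2 * Q ^ n = ε ^ 2 := by
    intro n
    induction n with
    | zero => simp
    | succ n ih => rw [pow_succ Q n, ← mul_assoc, ih, hQ]; linear_combination (ι X - 1) * hε
  have h := congrArg ι (qBinom_central_mul_prod hN)
  simp only [map_mul, map_add, map_pow, map_one, map_prod] at h
  have hprod : ∏ i ∈ range N, Q * B i * (1 + ε ^ 2 * (2 * Ring.inverse (B i))) =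
      Q ^ N * (∏ i ∈ range N, B i) * (1 + ε ^ 2 * (2 * ∑ i ∈ range N, Ring.inverse (B i))) := by
    rw [prod_mul_distrib, prod_mul_distrib, prod_const, card_range, prod_one_add_mul_of_sq_eq_zero
      (by rw [← pow_mul, pow_succ ε 3, hε, zero_mul]), ← mul_sum]
  rw [prod_congr rfl fun i hi ↦ mul_add_sq_mul_one_add_eq hε hQ (hB i hi), hprod] at h
  have h' : ι (qBinom (2 * p) p) = (1 + Q) * Q ^ N *
      (1 + ε ^ 2 * (2 * ∑ i ∈ range N, Ring.inverse (B i))) :=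
    (IsUnit.prod_iff.mpr hB).mul_right_cancel (h.trans (by ring))
  linear_combination h' + (2 * ∑ i ∈ range N, Ring.inverse (B i)) * (hεQ N + hεQ (N + 1))

lemma toCycCube_qInt_sq_mul_sum_inverse (hp : p.Prime) (hN : p = 2 * N + 1) {c : ℤ}
    (hc : 3 * c = N * (N + 1)) :
    toCycCube p (qInt p) ^ 2 * (2 * ∑ i ∈ range N,
      Ring.inverse (toCycCube p (qInt (i + 1)) * toCycCube p (qInt (p - 1 - i)))) =
        toCycCube p (qInt p) ^ 2 * (c * (toCycCube p X - 1) ^ 2) := by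
  rw [← sub_eq_zero, ← mul_sub]
  have hζ := Complex.isPrimitiveRoot_exp p hp.ne_zero
  set ζ := Complex.exp (2 * Real.pi * Complex.I / p)
  refine toCycCube_qInt_sq_mul_eq_zero hζ hp ?_
  have hζ1 : ζ ≠ 1 := hζ.ne_one hp.one_lt
  rw [map_sub, map_mul, map_mul, map_sum, sum_congr rfl fun i hi ↦ map_ringInverse _
    (isUnit_toCycCube_qInt_mul_qInt_sub hp (by rw [mem_range] at hi; omega))]
  simp only [map_mul, map_pow, map_sub, map_one, map_intCast, map_ofNat, evalCycCube_toCycCube,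
    aeval_qInt hζ1, aeval_X]
  have hsum := (hN ▸ hζ).sum_inv_one_sub_pow_mul_one_sub_pow
  rw [sum_range_two_mul] at hsum
  have hflip : ∀ a b : ℕ, (1 - ζ ^ a) * (1 - ζ ^ b) = (ζ ^ a - 1) * (ζ ^ b - 1) :=
    fun a b ↦ by ring
  have hterm : ∀ i ∈ range N,
      2 * ((ζ ^ (i + 1) - 1) / (ζ - 1) * ((ζ ^ (p - 1 - i) - 1) / (ζ - 1)))⁻¹ =
        (ζ - 1) ^ 2 * (((1 - ζ ^ (i + 1)) * (1 - ζ ^ (2 * N - i)))⁻¹ +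
          ((1 - ζ ^ (2 * N - 1 - i + 1)) * (1 - ζ ^ (2 * N - (2 * N - 1 - i))))⁻¹) := by
    intro i hi
    rw [mem_range] at hi
    rw [show 2 * N - 1 - i + 1 = p - 1 - i by omega,
      show 2 * N - (2 * N - 1 - i) = i + 1 by omega, show 2 * N - i = p - 1 - i by omega,
      hflip, hflip, div_mul_div_comm, inv_div]
    ring
  have hcℂ : (3 * c : ℂ) = N * (N + 1) := by exact_mod_cast hc
  rw [mul_sum, sum_congr rfl hterm, ← mul_sum, hsum]
  push_cast
  linear_combination (-(ζ - 1) ^ 2 / 3) * hcℂ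

end Central

lemma three_mul_sq_sub_one_div_twelve {p N : ℕ} (hN : p = 2 * N + 1) (h : ¬ 3 ∣ p) :
    3 * (((p : ℤ) ^ 2 - 1) / 12) = N * (N + 1) := by
  subst hN
  rcases (by omega : N % 3 = 0 ∨ N % 3 = 2) with h0 | h2
  · obtain ⟨t, rfl⟩ : ∃ t, N = 3 * t := ⟨N / 3, by omega⟩
    push_cast
    rw [show ((2 * (3 * t) + 1 : ℤ) ^ 2 - 1) = 12 * (t * (3 * t + 1)) by ring,
      Int.mul_ediv_cancel_left _ (by norm_num)]
    ring
  · obtain ⟨t, rfl⟩ : ∃ t, N = 3 * t + 2 := ⟨N / 3, by omega⟩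
    push_cast
    rw [show ((2 * (3 * t + 2) + 1 : ℤ) ^ 2 - 1) = 12 * ((3 * t + 2) * (t + 1)) by ring,
      Int.mul_ediv_cancel_left _ (by norm_num)]
    ring

theorem q_wolstenholme (p : ℕ) (hp : p.Prime) (hp5 : 5 ≤ p) :
    (qInt p) ^ 3 ∣
      qBinom (2 * p) p -
        (1 + X ^ (p ^ 2) - C (((p : ℤ) ^ 2 - 1) / 12) * (X ^ p - 1) ^ 2) := by
  obtain ⟨N, hN⟩ := hp.odd_of_ne_two (by omega)
  have hc := three_mul_sq_sub_one_div_twelve hN fun h ↦ by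
    rw [Nat.prime_dvd_prime_iff_eq Nat.prime_three hp] at h
    omega
  apply qInt_pow_three_dvd_of_toCycCube_eq_zero hp
  have hw : ((toCycCube p X - 1) * toCycCube p (qInt p)) ^ 3 = 0 := by
    rw [mul_pow, toCycCube_qInt_pow_three hp, mul_zero]
  have hbin := one_add_one_add_pow_two_mul_add_one hw N
  rw [← hN] at hbin
  have hcA := congrArg (Int.cast : ℤ → CycCube p) hc
  push_cast at hcA
  rw [map_sub, toCycCube_qBinom_central hp hN, toCycCube_qInt_sq_mul_sum_inverse hp hN hc]
  simp only [map_sub, map_add, map_mul, map_pow, map_one]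
  rw [sq p, pow_mul, toCycCube_X_pow, ← RingHom.comp_apply, eq_intCast]
  linear_combination -hbin + ((toCycCube p X - 1) * toCycCube p (qInt p)) ^ 2 * hcA
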